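/- arXiv:2109.14356 — 9 statements merged into one kernel-verified Lean document; each statement's English description precedes it below -/
import Mathlib

section
/- For every real number δ with 0 < δ < 1, it holds that -δ - (1-δ)·log(1-δ) < -9δ²/(18 - 6δ - δ²). -/
/-!
Put `g x = x + (1 - x) log (1 - x) - 9 x² / (18 - 6 x - x²)`, so that `g 0 = 0` and the claim
is `0 < g δ`. Its derivative is `-log (1 - x) - 54 x (6 - x) / (18 - 6 x - x²)²`, which is
positive on `(0, 1)`: bound `-log (1 - x)` below by the first five terms of its power series
and compare with the Padé term by a polynomial inequality. Hence `g` is strictly increasing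
on `[0, 1)`.
-/

open Real Set Finset

lemma sum_range_pow_div_le_neg_log_one_sub {x : ℝ} (h0 : 0 ≤ x) (h1 : x < 1) (n : ℕ) :
    ∑ i ∈ range n, x ^ (i + 1) / (i + 1) ≤ -log (1 - x) :=
  sum_le_hasSum _ (fun _ _ => by positivity)
    (hasSum_pow_div_log_of_abs_lt_one (abs_lt.mpr ⟨by linarith, h1⟩))

lemma hasDerivAt_add_one_sub_mul_log_one_sub {x : ℝ} (hx : x ≠ 1) :
    HasDerivAt (fun x => x + (1 - x) * log (1 - x)) (-log (1 - x)) x := by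
  have hsub : HasDerivAt (fun x : ℝ => 1 - x) (-1) x := (hasDerivAt_id x).const_sub 1
  refine ((hasDerivAt_id x).add (hsub.mul (hsub.log (sub_ne_zero.mpr hx.symm)))).congr_deriv ?_
  field_simp [sub_ne_zero.mpr hx.symm]
  ring

lemma hasDerivAt_pade {x : ℝ} (hx : 18 - 6 * x - x ^ 2 ≠ 0) :
    HasDerivAt (fun x => 9 * x ^ 2 / (18 - 6 * x - x ^ 2))
      (54 * x * (6 - x) / (18 - 6 * x - x ^ 2) ^ 2) x := by
  have hnum : HasDerivAt (fun x : ℝ => 9 * x ^ 2) (9 * (2 * x)) x := by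
    simpa using (hasDerivAt_pow 2 x).const_mul (9 : ℝ)
  have hden : HasDerivAt (fun x : ℝ => 18 - 6 * x - x ^ 2) (-6 - 2 * x) x :=
    ((((hasDerivAt_id' x).const_mul (6 : ℝ)).const_sub 18).sub (hasDerivAt_pow 2 x)).congr_deriv
      (by ring)
  refine (hnum.div hden hx).congr_deriv ?_
  ring

lemma pade_denom_pos {x : ℝ} (h0 : 0 ≤ x) (h1 : x ≤ 1) : 0 < 18 - 6 * x - x ^ 2 := by
  nlinarith

lemma pade_deriv_lt_taylor {x : ℝ} (h0 : 0 < x) (h1 : x < 1) :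
    54 * x * (6 - x) / (18 - 6 * x - x ^ 2) ^ 2 <
      x + x ^ 2 / 2 + x ^ 3 / 3 + x ^ 4 / 4 + x ^ 5 / 5 := by
  rw [div_lt_iff₀ (pow_pos (pade_denom_pos h0.le h1.le) 2)]
  nlinarith [pow_pos h0 3, pow_pos h0 4, pow_pos h0 5, mul_pos h0 (sub_pos.mpr h1)]

lemma strictMonoOn_pade_gap :
    StrictMonoOn (fun x => x + (1 - x) * log (1 - x) - 9 * x ^ 2 / (18 - 6 * x - x ^ 2))
      (Ico 0 1) := by
  have hderiv : ∀ x ∈ Ico (0 : ℝ) 1, HasDerivAt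
      (fun x => x + (1 - x) * log (1 - x) - 9 * x ^ 2 / (18 - 6 * x - x ^ 2))
      (-log (1 - x) - 54 * x * (6 - x) / (18 - 6 * x - x ^ 2) ^ 2) x := fun x hx =>
    (hasDerivAt_add_one_sub_mul_log_one_sub hx.2.ne).sub
      (hasDerivAt_pade (pade_denom_pos hx.1 hx.2.le).ne')
  refine strictMonoOn_of_deriv_pos (convex_Ico 0 1)
    (fun x hx => (hderiv x hx).continuousAt.continuousWithinAt) fun x hx => ?_
  rw [interior_Ico] at hx
  rw [(hderiv x (Ioo_subset_Ico_self hx)).deriv, sub_pos]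
  have htaylor := sum_range_pow_div_le_neg_log_one_sub hx.1.le hx.2 5
  simp only [sum_range_succ, sum_range_zero] at htaylor
  norm_num at htaylor
  linarith [pade_deriv_lt_taylor hx.1 hx.2]

theorem pade_lower_tail (δ : ℝ) (h0 : 0 < δ) (h1 : δ < 1) :
    -δ - (1 - δ) * Real.log (1 - δ) < -9 * δ ^ 2 / (18 - 6 * δ - δ ^ 2) := by
  have h := strictMonoOn_pade_gap (left_mem_Ico.mpr zero_lt_one) ⟨h0.le, h1⟩ h0
  norm_num at h
  rw [neg_mul, neg_div]
  linarith
end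

section
/- For every real number δ with 0 < δ < 1, it holds that δ + log(1-δ) < -9δ²/(18 - 12δ - δ²). -/
/-!
The gap `g(x) = -9x²/(18 - 12x - x²) - x - log(1 - x)` vanishes at `0`, and its derivative
simplifies to `x⁴(24 + x) / ((1 - x)(18 - 12x - x²)²)`, which is positive on `(0, 1)`:
the Padé approximant agrees with `x + log(1 - x)` to fourth order at `0`.
Hence `g` is strictly increasing on `[0, 1)`, so `g(δ) > 0`.
-/

open Real Set

noncomputable def padeGap (x : ℝ) : ℝ :=
  -9 * x ^ 2 / (18 - 12 * x - x ^ 2) - x - log (1 - x)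

lemma padeDenom_pos {x : ℝ} (hx₀ : -1 ≤ x) (hx₁ : x ≤ 1) : 0 < 18 - 12 * x - x ^ 2 := by
  nlinarith

lemma hasDerivAt_padeGap {x : ℝ} (hx : x < 1) (hD : 18 - 12 * x - x ^ 2 ≠ 0) :
    HasDerivAt padeGap (x ^ 4 * (24 + x) / ((1 - x) * (18 - 12 * x - x ^ 2) ^ 2)) x := by
  have hnum : HasDerivAt (fun y : ℝ => -9 * y ^ 2) (-9 * (2 * x)) x := by
    simpa using (hasDerivAt_pow 2 x).const_mul (-9 : ℝ)
  have hden : HasDerivAt (fun y : ℝ => 18 - 12 * y - y ^ 2) (-12 - 2 * x) x := by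
    simpa using (((hasDerivAt_id x).const_mul 12).const_sub 18).fun_sub (hasDerivAt_pow 2 x)
  have hlog : HasDerivAt (fun y : ℝ => log (1 - y)) (-1 / (1 - x)) x := by
    simpa using ((hasDerivAt_id x).const_sub 1).log (sub_ne_zero.mpr hx.ne')
  refine (((hnum.div hden hD).fun_sub (hasDerivAt_id x)).fun_sub hlog).congr_deriv ?_
  have h1x : 1 - x ≠ 0 := sub_ne_zero.mpr hx.ne'
  rw [div_sub_one (pow_ne_zero 2 hD), div_sub_div _ _ (pow_ne_zero 2 hD) h1x,
    div_eq_div_iff (mul_ne_zero (pow_ne_zero 2 hD) h1x) (mul_ne_zero h1x (pow_ne_zero 2 hD))]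
  ring

lemma strictMonoOn_padeGap : StrictMonoOn padeGap (Ico 0 1) := by
  have hD : ∀ x ∈ Ico (0 : ℝ) 1, 0 < 18 - 12 * x - x ^ 2 := fun x hx =>
    padeDenom_pos (by linarith [hx.1]) hx.2.le
  have hderiv : ∀ x ∈ Ico (0 : ℝ) 1, HasDerivAt padeGap
      (x ^ 4 * (24 + x) / ((1 - x) * (18 - 12 * x - x ^ 2) ^ 2)) x := fun x hx =>
    hasDerivAt_padeGap hx.2 (hD x hx).ne'
  refine strictMonoOn_of_hasDerivWithinAt_pos (convex_Ico 0 1)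
    (fun x hx => (hderiv x hx).continuousAt.continuousWithinAt)
    (fun x hx => (hderiv x (Ioo_subset_Ico_self (by rwa [interior_Ico] at hx))).hasDerivWithinAt) ?_
  rw [interior_Ico]
  rintro x ⟨hx₀, hx₁⟩
  have h1x : 0 < 1 - x := sub_pos.mpr hx₁
  have hDx := hD x ⟨hx₀.le, hx₁⟩
  positivity

theorem pade_conf_lower (δ : ℝ) (h0 : 0 < δ) (h1 : δ < 1) :
    δ + Real.log (1 - δ) < -9 * δ ^ 2 / (18 - 12 * δ - δ ^ 2) := by
  have hgap : padeGap 0 < padeGap δ :=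
    strictMonoOn_padeGap ⟨le_rfl, zero_lt_one⟩ ⟨h0.le, h1⟩ h0
  have hgap0 : padeGap 0 = 0 := by simp [padeGap]
  rw [hgap0, padeGap] at hgap
  linarith
end

section
/- Let X₁, …, Xₙ be independent Poisson trials (independent {0,1}-valued random variables with P(Xᵢ = 1) = pᵢ), let X = ∑ᵢ Xᵢ and μ = E[X]. Then for every real δ with 0 < δ < 1, P(X ≥ (1+δ)μ) ≤ exp(-3δ²μ/(6+2δ)). -/
/-!
For `{0,1}`-valued `Y` one has `exp (t * Y) = 1 + (exp t - 1) * Y`, so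
`mgf Y t ≤ exp ((exp t - 1) * E Y)` by `1 + u ≤ exp u`; by independence the mgf of the sum
is at most `exp ((exp t - 1) * μ)`.
Markov's inequality at `t = log (1 + δ)` gives the classical bound
`exp ((δ - (1 + δ) log (1 + δ)) μ)`. The Padé-type estimate
`log (1 + x) ≥ x (6 + 5x) / (2 (1 + x) (3 + x))` for `x ≥ 0`, whose difference has derivative
`x³ / ((1 + x)² (3 + x)²)`, turns the exponent into `-3δ²μ / (6 + 2δ)`.
-/

open MeasureTheory ProbabilityTheory Real

lemma hasDerivAt_log_one_add_sub_pade {y : ℝ} (hy : -1 < y) :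
    HasDerivAt (fun x => log (1 + x) - x * (6 + 5 * x) / (2 * (1 + x) * (3 + x)))
      (y ^ 3 / ((1 + y) ^ 2 * (3 + y) ^ 2)) y := by
  have h1 : 0 < 1 + y := by linarith
  have h3 : 0 < 3 + y := by linarith
  have hlog : HasDerivAt (fun x => log (1 + x)) (1 / (1 + y)) y := by
    simpa using ((hasDerivAt_id y).const_add 1).log h1.ne'
  have hnum : HasDerivAt (fun x : ℝ => x * (6 + 5 * x)) (6 + 10 * y) y :=
    ((hasDerivAt_id' y).mul (((hasDerivAt_id' y).const_mul 5).const_add 6)).congr_deriv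
      (by ring)
  have hden : HasDerivAt (fun x : ℝ => 2 * (1 + x) * (3 + x)) (8 + 4 * y) y :=
    ((((hasDerivAt_id' y).const_add 1).const_mul 2).mul
      ((hasDerivAt_id' y).const_add 3)).congr_deriv (by ring)
  refine (hlog.sub (hnum.div hden (by positivity))).congr_deriv ?_
  field_simp
  ring

lemma pade_le_log_one_add {x : ℝ} (hx : 0 ≤ x) :
    x * (6 + 5 * x) / (2 * (1 + x) * (3 + x)) ≤ log (1 + x) := by
  have hderiv (y : ℝ) (hy : y ∈ Set.Ici 0) := hasDerivAt_log_one_add_sub_pade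
    (by linarith [Set.mem_Ici.mp hy] : -1 < y)
  have hmono : MonotoneOn (fun x => log (1 + x) - x * (6 + 5 * x) / (2 * (1 + x) * (3 + x)))
      (Set.Ici 0) := by
    refine monotoneOn_of_hasDerivWithinAt_nonneg (convex_Ici 0)
      (fun y hy => (hderiv y hy).continuousAt.continuousWithinAt)
      (fun y hy => (hderiv y (interior_subset hy)).hasDerivWithinAt) (fun y hy => ?_)
    have : 0 ≤ y := interior_subset hy
    positivity
  simpa using hmono Set.self_mem_Ici hx hx

lemma sub_mul_log_one_add_le {x : ℝ} (hx : 0 ≤ x) :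
    x - (1 + x) * log (1 + x) ≤ -(3 * x ^ 2 / (6 + 2 * x)) := by
  have key : x + 3 * x ^ 2 / (6 + 2 * x) =
      (1 + x) * (x * (6 + 5 * x) / (2 * (1 + x) * (3 + x))) := by
    field_simp
    ring
  have := mul_le_mul_of_nonneg_left (pade_le_log_one_add hx) (by linarith : 0 ≤ 1 + x)
  linarith

lemma exp_mul_eq_of_eq_zero_or_eq_one {x : ℝ} (hx : x = 0 ∨ x = 1) (t : ℝ) :
    exp (t * x) = 1 + (exp t - 1) * x := by
  rcases hx with rfl | rfl <;> simp

section ZeroOne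

variable {Ω : Type*} [MeasurableSpace Ω] {P : Measure Ω} {Y : Ω → ℝ}

lemma integrable_of_eq_zero_or_eq_one [IsFiniteMeasure P] (hY : Measurable Y)
    (h01 : ∀ ω, Y ω = 0 ∨ Y ω = 1) : Integrable Y P :=
  .of_bound hY.aestronglyMeasurable 1 <| .of_forall fun ω => by
    rcases h01 ω with h | h <;> simp [h]

lemma integrable_exp_mul_of_eq_zero_or_eq_one [IsFiniteMeasure P] (hY : Measurable Y)
    (h01 : ∀ ω, Y ω = 0 ∨ Y ω = 1) (t : ℝ) : Integrable (fun ω => exp (t * Y ω)) P := by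
  simp_rw [exp_mul_eq_of_eq_zero_or_eq_one (h01 _)]
  exact (integrable_const 1).add ((integrable_of_eq_zero_or_eq_one hY h01).const_mul _)

lemma mgf_eq_of_eq_zero_or_eq_one [IsProbabilityMeasure P] (hY : Measurable Y)
    (h01 : ∀ ω, Y ω = 0 ∨ Y ω = 1) (t : ℝ) : mgf Y P t = 1 + (exp t - 1) * P[Y] := by
  simp_rw [mgf, exp_mul_eq_of_eq_zero_or_eq_one (h01 _)]
  rw [integral_add (integrable_const 1) ((integrable_of_eq_zero_or_eq_one hY h01).const_mul _),
    integral_const_mul]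
  simp

lemma mgf_le_exp_of_eq_zero_or_eq_one [IsProbabilityMeasure P] (hY : Measurable Y)
    (h01 : ∀ ω, Y ω = 0 ∨ Y ω = 1) (t : ℝ) : mgf Y P t ≤ exp ((exp t - 1) * P[Y]) := by
  rw [mgf_eq_of_eq_zero_or_eq_one hY h01, add_comm]
  exact add_one_le_exp _

end ZeroOne

section PoissonTrials

variable {Ω ι : Type*} [MeasurableSpace Ω] {P : Measure Ω} [IsProbabilityMeasure P]
  {X : ι → Ω → ℝ} (hmeas : ∀ i, Measurable (X i)) (hindep : iIndepFun X P)
  (h01 : ∀ i ω, X i ω = 0 ∨ X i ω = 1)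

include hmeas hindep h01

lemma mgf_sum_le_of_eq_zero_or_eq_one (s : Finset ι) (t : ℝ) :
    mgf (∑ i ∈ s, X i) P t ≤ exp ((exp t - 1) * ∫ ω, ∑ i ∈ s, X i ω ∂P) := by
  rw [hindep.mgf_sum hmeas, integral_finsetSum _
    fun i _ => integrable_of_eq_zero_or_eq_one (hmeas i) (h01 i), Finset.mul_sum, exp_sum]
  exact Finset.prod_le_prod (fun i _ => mgf_nonneg)
    fun i _ => mgf_le_exp_of_eq_zero_or_eq_one (hmeas i) (h01 i) t

lemma measureReal_le_sum_le_exp_of_eq_zero_or_eq_one (s : Finset ι) (a : ℝ) {t : ℝ}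
    (ht : 0 ≤ t) :
    P.real {ω | a ≤ ∑ i ∈ s, X i ω} ≤
      exp (-t * a + (exp t - 1) * ∫ ω, ∑ i ∈ s, X i ω ∂P) := by
  have hint := hindep.integrable_exp_mul_sum hmeas (s := s)
    fun i _ => integrable_exp_mul_of_eq_zero_or_eq_one (hmeas i) (h01 i) t
  calc P.real {ω | a ≤ ∑ i ∈ s, X i ω} = P.real {ω | a ≤ (∑ i ∈ s, X i) ω} := by
        simp only [Finset.sum_apply]
    _ ≤ exp (-t * a) * mgf (∑ i ∈ s, X i) P t := measure_ge_le_exp_mul_mgf a ht hint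
    _ ≤ exp (-t * a) * exp ((exp t - 1) * ∫ ω, ∑ i ∈ s, X i ω ∂P) := by
        gcongr; exact mgf_sum_le_of_eq_zero_or_eq_one hmeas hindep h01 s t
    _ = _ := (exp_add _ _).symm

lemma measureReal_one_add_mul_le_sum_le_exp (s : Finset ι) {δ : ℝ} (hδ : 0 ≤ δ) :
    P.real {ω | (1 + δ) * ∫ ω, ∑ i ∈ s, X i ω ∂P ≤ ∑ i ∈ s, X i ω} ≤
      exp ((δ - (1 + δ) * log (1 + δ)) * ∫ ω, ∑ i ∈ s, X i ω ∂P) := by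
  have hexp : exp (log (1 + δ)) = 1 + δ := exp_log (by linarith)
  have ht : 0 ≤ log (1 + δ) := log_nonneg (by linarith)
  refine (measureReal_le_sum_le_exp_of_eq_zero_or_eq_one hmeas hindep h01 s _ ht).trans_eq ?_
  rw [hexp]
  congr 1
  ring

end PoissonTrials

theorem chernoff_upper_pade_general {Ω : Type*} [MeasureSpace Ω]
    [IsProbabilityMeasure (ℙ : Measure Ω)]
    (n : ℕ) (X : Fin n → Ω → ℝ)
    (hmeas : ∀ i, Measurable (X i))
    (hindep : iIndepFun X ℙ)
    (h01 : ∀ i ω, X i ω = 0 ∨ X i ω = 1)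
    (μ : ℝ) (hμ : μ = ∫ ω, (∑ i, X i ω) ∂ℙ)
    (δ : ℝ) (hδ0 : 0 < δ) :
    (ℙ {ω | (1 + δ) * μ ≤ ∑ i, X i ω}).toReal ≤
      Real.exp (-3 * δ ^ 2 * μ / (6 + 2 * δ)) := by
  have hμ0 : 0 ≤ μ := hμ ▸ integral_nonneg fun ω =>
    Finset.sum_nonneg fun i _ => by rcases h01 i ω with h | h <;> simp [h]
  calc (ℙ {ω | (1 + δ) * μ ≤ ∑ i, X i ω}).toReal
      ≤ exp ((δ - (1 + δ) * log (1 + δ)) * μ) :=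
        hμ ▸ measureReal_one_add_mul_le_sum_le_exp hmeas hindep h01 _ hδ0.le
    _ ≤ exp (-(3 * δ ^ 2 / (6 + 2 * δ)) * μ) := by
        gcongr
        exact sub_mul_log_one_add_le hδ0.le
    _ = exp (-3 * δ ^ 2 * μ / (6 + 2 * δ)) := by congr 1; ring

theorem chernoff_upper_pade {Ω : Type*} [MeasureSpace Ω]
    [IsProbabilityMeasure (ℙ : Measure Ω)]
    (n : ℕ) (X : Fin n → Ω → ℝ) (p : Fin n → ℝ)
    (hmeas : ∀ i, Measurable (X i))
    (hindep : iIndepFun X ℙ)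
    (h01 : ∀ i ω, X i ω = 0 ∨ X i ω = 1)
    (hp : ∀ i, (ℙ {ω | X i ω = 1}).toReal = p i)
    (μ : ℝ) (hμ : μ = ∫ ω, (∑ i, X i ω) ∂ℙ)
    (δ : ℝ) (hδ0 : 0 < δ) (hδ1 : δ < 1) :
    (ℙ {ω | (1 + δ) * μ ≤ ∑ i, X i ω}).toReal ≤
      Real.exp (-3 * δ ^ 2 * μ / (6 + 2 * δ)) :=
  chernoff_upper_pade_general n X hmeas hindep h01 μ hμ δ hδ0
end

section
/- Let X₁, …, Xₙ be independent Poisson trials (independent {0,1}-valued random variables with P(Xᵢ = 1) = pᵢ), let X = ∑ᵢ Xᵢ and μ = E[X]. Then for every real δ with 0 < δ < 1, P(X ≤ (1-δ)μ) ≤ exp(-9δ²μ/(18 - 6δ - δ²)). -/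
/-!
Chernoff's method with `t = log (1 - δ)` gives
`P(X ≤ (1 - δ) μ) ≤ exp (-(δ + (1 - δ) log (1 - δ)) μ)`, because for a `{0,1}`-valued `Xᵢ`
with mean `pᵢ` one has `E exp (t Xᵢ) = 1 + (eᵗ - 1) pᵢ ≤ exp ((eᵗ - 1) pᵢ)`.
With `x = 1 - δ`, the rate `δ + (1 - δ) log (1 - δ)` dominates `9δ² / (18 - 6δ - δ²)` exactly when
`log x ≥ -(1 - x)(2 + 17x - x²) / (x (11 + 8x - x²))`, a Padé-type lower bound for `log`.
The difference of the two sides has derivative `(x - 1)⁴ (x - 22) / (x (11 + 8x - x²))²`,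
so it decreases on `(0, 1]` and vanishes at `1`.
-/

open Real MeasureTheory ProbabilityTheory Finset

noncomputable def logPadeGap (x : ℝ) : ℝ :=
  log x + (1 - x) * (2 + 17 * x - x ^ 2) / (x * (11 + 8 * x - x ^ 2))

theorem hasDerivAt_logPadeGap {x : ℝ} (hx : x ≠ 0) (hq : 11 + 8 * x - x ^ 2 ≠ 0) :
    HasDerivAt logPadeGap ((x - 1) ^ 4 * (x - 22) / (x * (11 + 8 * x - x ^ 2)) ^ 2) x := by
  have hnum : HasDerivAt (fun y => (1 - y) * (2 + 17 * y - y ^ 2))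
      (-(2 + 17 * x - x ^ 2) + (1 - x) * (17 - 2 * x)) x :=
    (((hasDerivAt_id x).const_sub 1).mul
      ((((hasDerivAt_id x).const_mul 17).const_add 2).sub (hasDerivAt_pow 2 x))).congr_deriv
      (by simp only [id, Pi.sub_apply]; ring)
  have hden : HasDerivAt (fun y => y * (11 + 8 * y - y ^ 2))
      ((11 + 8 * x - x ^ 2) + x * (8 - 2 * x)) x :=
    ((hasDerivAt_id x).mul
      ((((hasDerivAt_id x).const_mul 8).const_add 11).sub (hasDerivAt_pow 2 x))).congr_deriv
      (by simp only [id, Pi.sub_apply]; ring)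
  refine ((hasDerivAt_log hx).add (hnum.div hden (mul_ne_zero hx hq))).congr_deriv ?_
  have hden0 : (x * (11 + 8 * x - x ^ 2)) ^ 2 ≠ 0 := pow_ne_zero 2 (mul_ne_zero hx hq)
  rw [inv_eq_one_div, div_add_div _ _ hx hden0, div_eq_div_iff (mul_ne_zero hx hden0) hden0]
  ring

theorem logPadeGap_nonneg {x : ℝ} (hx0 : 0 < x) (hx1 : x ≤ 1) : 0 ≤ logPadeGap x := by
  have hderiv : ∀ y ∈ Set.Icc x 1, HasDerivAt logPadeGap
      ((y - 1) ^ 4 * (y - 22) / (y * (11 + 8 * y - y ^ 2)) ^ 2) y := fun y hy =>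
    hasDerivAt_logPadeGap (hx0.trans_le hy.1).ne' (by nlinarith [hy.1, hy.2])
  have hanti : AntitoneOn logPadeGap (Set.Icc x 1) := by
    refine antitoneOn_of_deriv_nonpos (convex_Icc x 1)
      (fun y hy => (hderiv y hy).continuousAt.continuousWithinAt)
      (fun y hy => (hderiv y (interior_subset hy)).differentiableAt.differentiableWithinAt)
      (fun y hy => ?_)
    rw [interior_Icc] at hy
    rw [(hderiv y (Set.Ioo_subset_Icc_self hy)).deriv]
    exact div_nonpos_of_nonpos_of_nonneg
      (mul_nonpos_of_nonneg_of_nonpos (by positivity) (by linarith [hy.2])) (by positivity)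
  calc (0 : ℝ) = logPadeGap 1 := by simp [logPadeGap]
    _ ≤ logPadeGap x := hanti ⟨le_rfl, hx1⟩ ⟨hx1, le_rfl⟩ hx1

theorem pade_le_chernoff_rate {δ : ℝ} (hδ0 : 0 ≤ δ) (hδ1 : δ < 1) :
    9 * δ ^ 2 / (18 - 6 * δ - δ ^ 2) ≤ δ + (1 - δ) * log (1 - δ) := by
  have hden : 0 < (1 - δ) * (11 + 8 * (1 - δ) - (1 - δ) ^ 2) := by nlinarith
  have hgap := logPadeGap_nonneg (x := 1 - δ) (by linarith) (by linarith)
  rw [logPadeGap, ← neg_le_iff_add_nonneg', le_div_iff₀ hden] at hgap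
  rw [div_le_iff₀ (by nlinarith)]
  linear_combination hgap

section ZeroOne

variable {Ω ι : Type*} [MeasurableSpace Ω] {μ : Measure Ω}

theorem nonneg_of_zero_or_one {x : ℝ} (h : x = 0 ∨ x = 1) : 0 ≤ x := by
  rcases h with rfl | rfl <;> norm_num

theorem integrable_of_zero_or_one [IsFiniteMeasure μ] {X : Ω → ℝ} (hX : AEMeasurable X μ)
    (h01 : ∀ ω, X ω = 0 ∨ X ω = 1) : Integrable X μ :=
  .of_bound hX.aestronglyMeasurable 1 <| .of_forall fun ω => by
    rcases h01 ω with h | h <;> simp [h]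

theorem mgf_of_zero_or_one [IsProbabilityMeasure μ] {X : Ω → ℝ} (hX : AEMeasurable X μ)
    (h01 : ∀ ω, X ω = 0 ∨ X ω = 1) (t : ℝ) : mgf X μ t = 1 + (exp t - 1) * μ[X] := by
  have hexp : (fun ω => exp (t * X ω)) = fun ω => 1 + (exp t - 1) * X ω := by
    funext ω
    rcases h01 ω with h | h <;> simp [h]
  rw [mgf, hexp, integral_add (integrable_const 1)
    ((integrable_of_zero_or_one hX h01).const_mul _), integral_const_mul]
  simp

theorem mgf_sum_le_of_zero_or_one [Fintype ι] {X : ι → Ω → ℝ} (hX : ∀ i, AEMeasurable (X i) μ)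
    (hindep : iIndepFun X μ) (h01 : ∀ i ω, X i ω = 0 ∨ X i ω = 1) (t : ℝ) :
    mgf (∑ i, X i) μ t ≤ exp ((exp t - 1) * ∑ i, μ[X i]) := by
  have := hindep.isProbabilityMeasure
  rw [hindep.mgf_sum₀ hX, mul_sum, exp_sum]
  refine prod_le_prod (fun i _ => mgf_nonneg) fun i _ => ?_
  rw [mgf_of_zero_or_one (hX i) (h01 i)]
  linarith [add_one_le_exp ((exp t - 1) * μ[X i])]

theorem measureReal_sum_le_le_exp_of_zero_or_one [Fintype ι] {X : ι → Ω → ℝ}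
    (hX : ∀ i, AEMeasurable (X i) μ) (hindep : iIndepFun X μ)
    (h01 : ∀ i ω, X i ω = 0 ∨ X i ω = 1) {δ : ℝ} (hδ0 : 0 ≤ δ) (hδ1 : δ < 1) :
    μ.real {ω | ∑ i, X i ω ≤ (1 - δ) * ∑ i, μ[X i]} ≤
      exp (-(δ + (1 - δ) * log (1 - δ)) * ∑ i, μ[X i]) := by
  have := hindep.isProbabilityMeasure
  set m := ∑ i, μ[X i]
  set t := log (1 - δ)
  have ht : t ≤ 0 := log_nonpos (by linarith) (by linarith)
  have hexp_t : exp t = 1 - δ := exp_log (by linarith)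
  have hint : Integrable (fun ω => exp (t * (∑ i, X i) ω)) μ := by
    refine .of_bound ?_ 1 (.of_forall fun ω => ?_)
    · exact ((Finset.aemeasurable_sum _ fun i _ => hX i).const_mul t).exp.aestronglyMeasurable
    · rw [norm_of_nonneg (exp_pos _).le, exp_le_one_iff, Finset.sum_apply]
      exact mul_nonpos_of_nonpos_of_nonneg ht
        (sum_nonneg fun i _ => nonneg_of_zero_or_one (h01 i ω))
  calc μ.real {ω | ∑ i, X i ω ≤ (1 - δ) * m}
      = μ.real {ω | (∑ i, X i) ω ≤ (1 - δ) * m} := by simp only [Finset.sum_apply]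
    _ ≤ exp (-t * ((1 - δ) * m)) * mgf (∑ i, X i) μ t := measure_le_le_exp_mul_mgf _ ht hint
    _ ≤ exp (-t * ((1 - δ) * m)) * exp ((exp t - 1) * m) := by
      gcongr; exact mgf_sum_le_of_zero_or_one hX hindep h01 t
    _ = exp (-(δ + (1 - δ) * t) * m) := by rw [← exp_add, hexp_t]; ring_nf

end ZeroOne

theorem chernoff_lower_pade_general {Ω : Type*} [MeasureSpace Ω]
    (n : ℕ) (X : Fin n → Ω → ℝ)
    (hmeas : ∀ i, Measurable (X i))
    (hindep : iIndepFun X ℙ)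
    (h01 : ∀ i ω, X i ω = 0 ∨ X i ω = 1)
    (μ : ℝ) (hμ : μ = ∫ ω, (∑ i, X i ω) ∂ℙ)
    (δ : ℝ) (hδ0 : 0 < δ) (hδ1 : δ < 1) :
    (ℙ {ω | ∑ i, X i ω ≤ (1 - δ) * μ}).toReal ≤
      Real.exp (-9 * δ ^ 2 * μ / (18 - 6 * δ - δ ^ 2)) := by
  have := hindep.isProbabilityMeasure
  have hμ_sum : μ = ∑ i, ∫ ω, X i ω := by
    rw [hμ, integral_finsetSum _ fun i _ =>
      integrable_of_zero_or_one (hmeas i).aemeasurable (h01 i)]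
  have hμ0 : 0 ≤ μ := hμ ▸ integral_nonneg fun ω =>
    sum_nonneg fun i _ => nonneg_of_zero_or_one (h01 i ω)
  calc (ℙ {ω | ∑ i, X i ω ≤ (1 - δ) * μ}).toReal
      ≤ exp (-(δ + (1 - δ) * log (1 - δ)) * μ) := by
        rw [hμ_sum]
        exact measureReal_sum_le_le_exp_of_zero_or_one (fun i => (hmeas i).aemeasurable)
          hindep h01 hδ0.le hδ1
    _ ≤ exp (-9 * δ ^ 2 * μ / (18 - 6 * δ - δ ^ 2)) := by
        rw [exp_le_exp, show -9 * δ ^ 2 * μ / (18 - 6 * δ - δ ^ 2)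
          = -(9 * δ ^ 2 / (18 - 6 * δ - δ ^ 2)) * μ by ring]
        exact mul_le_mul_of_nonneg_right (neg_le_neg (pade_le_chernoff_rate hδ0.le hδ1)) hμ0

theorem chernoff_lower_pade {Ω : Type*} [MeasureSpace Ω]
    [IsProbabilityMeasure (ℙ : Measure Ω)]
    (n : ℕ) (X : Fin n → Ω → ℝ) (p : Fin n → ℝ)
    (hmeas : ∀ i, Measurable (X i))
    (hindep : iIndepFun X ℙ)
    (h01 : ∀ i ω, X i ω = 0 ∨ X i ω = 1)
    (hp : ∀ i, (ℙ {ω | X i ω = 1}).toReal = p i)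
    (μ : ℝ) (hμ : μ = ∫ ω, (∑ i, X i ω) ∂ℙ)
    (δ : ℝ) (hδ0 : 0 < δ) (hδ1 : δ < 1) :
    (ℙ {ω | ∑ i, X i ω ≤ (1 - δ) * μ}).toReal ≤
      Real.exp (-9 * δ ^ 2 * μ / (18 - 6 * δ - δ ^ 2)) :=
  chernoff_lower_pade_general n X hmeas hindep h01 μ hμ δ hδ0 hδ1
end

section
/- Let X₁, …, Xₙ be independent Poisson trials, X = ∑ᵢ Xᵢ, μ = E[X]. Then for every real δ > 0, P(X ≤ μ/(1+δ)) ≤ exp( ((-δ + log(1+δ))/(1+δ)) · μ ). -/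
/-!
For a `{0, 1}`-valued variable `Y`, `exp (t * Y) = 1 + (exp t - 1) * Y`, so its moment generating
function is `1 + (exp t - 1) * 𝔼[Y] ≤ exp ((exp t - 1) * 𝔼[Y])`. By independence the moment
generating function of the sum is the product of these, hence at most `exp ((exp t - 1) * μ)`.
The lower-tail Chernoff bound at level `μ / (1 + δ)` with `t = -log (1 + δ)` then gives
`exp (log (1 + δ) * μ / (1 + δ) - δ * μ / (1 + δ))`.
-/

open MeasureTheory ProbabilityTheory Real

namespace PoissonTrials

variable {Ω : Type*} [MeasurableSpace Ω] {P : Measure Ω}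

lemma exp_mul_eq_of_eq_zero_or_eq_one (t : ℝ) {y : ℝ} (hy : y = 0 ∨ y = 1) :
    exp (t * y) = 1 + (exp t - 1) * y := by
  rcases hy with rfl | rfl <;> simp

lemma mem_Icc_of_eq_zero_or_eq_one {y : ℝ} (hy : y = 0 ∨ y = 1) : y ∈ Set.Icc (0 : ℝ) 1 := by
  rcases hy with rfl | rfl <;> simp

section SingleTrial

variable {Y : Ω → ℝ} (hY : Measurable Y) (h01 : ∀ ω, Y ω = 0 ∨ Y ω = 1)
include hY h01

lemma integrable_of_eq_zero_or_eq_one [IsFiniteMeasure P] : Integrable Y P :=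
  Integrable.of_mem_Icc 0 1 hY.aemeasurable <|
    ae_of_all _ fun ω => mem_Icc_of_eq_zero_or_eq_one (h01 ω)

lemma mgf_eq_of_eq_zero_or_eq_one [IsProbabilityMeasure P] (t : ℝ) :
    mgf Y P t = 1 + (exp t - 1) * P[Y] := by
  have hpointwise : (fun ω => exp (t * Y ω)) = fun ω => 1 + (exp t - 1) * Y ω :=
    funext fun ω => exp_mul_eq_of_eq_zero_or_eq_one t (h01 ω)
  rw [mgf, hpointwise, integral_add (integrable_const 1)
    ((integrable_of_eq_zero_or_eq_one hY h01).const_mul _), integral_const_mul]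
  simp

lemma mgf_le_exp_of_eq_zero_or_eq_one [IsProbabilityMeasure P] (t : ℝ) :
    mgf Y P t ≤ exp ((exp t - 1) * P[Y]) := by
  rw [mgf_eq_of_eq_zero_or_eq_one hY h01, add_comm]
  exact add_one_le_exp _

end SingleTrial

section IndependentTrials

variable {ι : Type*} {X : ι → Ω → ℝ} (hindep : iIndepFun X P) (hmeas : ∀ i, Measurable (X i))
  (h01 : ∀ i ω, X i ω = 0 ∨ X i ω = 1)
include hindep hmeas h01

lemma mgf_sum_le_exp (s : Finset ι) (t : ℝ) :
    mgf (∑ i ∈ s, X i) P t ≤ exp ((exp t - 1) * ∫ ω, ∑ i ∈ s, X i ω ∂P) := by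
  have := hindep.isProbabilityMeasure
  rw [hindep.mgf_sum hmeas, integral_finsetSum _
    fun i _ => integrable_of_eq_zero_or_eq_one (hmeas i) (h01 i), Finset.mul_sum, exp_sum]
  exact Finset.prod_le_prod (fun i _ => mgf_nonneg)
    fun i _ => mgf_le_exp_of_eq_zero_or_eq_one (hmeas i) (h01 i) t

lemma measureReal_sum_le_le_exp (s : Finset ι) {t : ℝ} (ht : t ≤ 0) (a : ℝ) :
    P.real {ω | ∑ i ∈ s, X i ω ≤ a} ≤
      exp (-t * a + (exp t - 1) * ∫ ω, ∑ i ∈ s, X i ω ∂P) := by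
  have := hindep.isProbabilityMeasure
  have hint : Integrable (fun ω => exp (t * (∑ i ∈ s, X i) ω)) P :=
    hindep.integrable_exp_mul_sum hmeas fun i _ =>
      integrable_exp_mul_of_mem_Icc (hmeas i).aemeasurable <|
        ae_of_all _ fun ω => mem_Icc_of_eq_zero_or_eq_one (h01 i ω)
  calc P.real {ω | ∑ i ∈ s, X i ω ≤ a}
      = P.real {ω | (∑ i ∈ s, X i) ω ≤ a} := by simp only [Finset.sum_apply]
    _ ≤ exp (-t * a) * mgf (∑ i ∈ s, X i) P t := measure_le_le_exp_mul_mgf a ht hint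
    _ ≤ exp (-t * a) * exp ((exp t - 1) * ∫ ω, ∑ i ∈ s, X i ω ∂P) :=
        mul_le_mul_of_nonneg_left (mgf_sum_le_exp hindep hmeas h01 s t) (exp_pos _).le
    _ = _ := (exp_add _ _).symm

end IndependentTrials

end PoissonTrials

open PoissonTrials

theorem chernoff_regression_lower_general {Ω : Type*} [MeasureSpace Ω]
    (n : ℕ) (X : Fin n → Ω → ℝ)
    (hmeas : ∀ i, Measurable (X i))
    (hindep : iIndepFun X ℙ)
    (h01 : ∀ i ω, X i ω = 0 ∨ X i ω = 1)
    (μ : ℝ) (hμ : μ = ∫ ω, (∑ i, X i ω) ∂ℙ)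
    (δ : ℝ) (hδ0 : 0 < δ) :
    (ℙ {ω | ∑ i, X i ω ≤ μ / (1 + δ)}).toReal ≤
      Real.exp ((-δ + Real.log (1 + δ)) / (1 + δ) * μ) := by
  have h1δ : 0 < 1 + δ := by linarith
  have hbound := measureReal_sum_le_le_exp hindep hmeas h01 Finset.univ
    (neg_nonpos.mpr (log_nonneg (by linarith) : 0 ≤ log (1 + δ))) (μ / (1 + δ))
  rw [← hμ, exp_neg, exp_log h1δ] at hbound
  refine hbound.trans_eq (congrArg exp ?_)
  field_simp
  ring

theorem chernoff_regression_lower {Ω : Type*} [MeasureSpace Ω]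
    [IsProbabilityMeasure (ℙ : Measure Ω)]
    (n : ℕ) (X : Fin n → Ω → ℝ) (p : Fin n → ℝ)
    (hmeas : ∀ i, Measurable (X i))
    (hindep : iIndepFun X ℙ)
    (h01 : ∀ i ω, X i ω = 0 ∨ X i ω = 1)
    (hp : ∀ i, (ℙ {ω | X i ω = 1}).toReal = p i)
    (μ : ℝ) (hμ : μ = ∫ ω, (∑ i, X i ω) ∂ℙ)
    (δ : ℝ) (hδ0 : 0 < δ) :
    (ℙ {ω | ∑ i, X i ω ≤ μ / (1 + δ)}).toReal ≤
      Real.exp ((-δ + Real.log (1 + δ)) / (1 + δ) * μ) :=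
  chernoff_regression_lower_general n X hmeas hindep h01 μ hμ δ hδ0
end

section
/- Let 0 < γ < 1, let μ̂ > 0 be a real number, set β = (log γ)/μ̂, and let δ_U = (-2β + √(4β² - 18β))/3 (the positive root of 3δ² + 4βδ + 6β = 0). Then (-δ_U + log(1+δ_U))·μ̂ ≤ log γ. -/
/-!
The Padé bound `log (1 + δ) ≤ (δ² + 6δ) / (4δ + 6)` holds for `δ ≥ 0`: the difference vanishes
at `0` and has derivative `4δ³ / ((4δ + 6)² (1 + δ)) ≥ 0`. For `β ≤ 0` the nonnegative root `δ_U`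
of `3δ² + 4βδ + 6β = 0` is exactly the point where this Padé bound equals `δ + β`, so
`-δ_U + log (1 + δ_U) ≤ β`; multiplying by `μ̂` and using `β μ̂ = log γ` gives the claim.
-/

open Real

lemma hasDerivAt_pade_sub_log {t : ℝ} (ht : 0 ≤ t) :
    HasDerivAt (fun x ↦ (x ^ 2 + 6 * x) / (4 * x + 6) - log (1 + x))
      (4 * t ^ 3 / ((4 * t + 6) ^ 2 * (1 + t))) t := by
  have hnum : HasDerivAt (fun x : ℝ ↦ x ^ 2 + 6 * x) (2 * t + 6) t :=
    (((hasDerivAt_id' t).pow 2).add ((hasDerivAt_id' t).const_mul 6)).congr_deriv (by ring)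
  have hden : HasDerivAt (fun x : ℝ ↦ 4 * x + 6) 4 t :=
    (((hasDerivAt_id' t).const_mul 4).add_const 6).congr_deriv (by ring)
  have hlog : HasDerivAt (fun x ↦ log (1 + x)) (1 / (1 + t)) t :=
    (((hasDerivAt_id' t).const_add 1).log (by positivity)).congr_deriv (by ring)
  refine ((hnum.div hden (by positivity)).sub hlog).congr_deriv ?_
  field_simp
  ring

lemma log_one_add_le_pade {x : ℝ} (hx : 0 ≤ x) :
    log (1 + x) ≤ (x ^ 2 + 6 * x) / (4 * x + 6) := by
  have hmono : MonotoneOn (fun x ↦ (x ^ 2 + 6 * x) / (4 * x + 6) - log (1 + x)) (Set.Ici 0) := by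
    refine monotoneOn_of_hasDerivWithinAt_nonneg (convex_Ici 0)
      (fun t ht ↦ (hasDerivAt_pade_sub_log ht).continuousAt.continuousWithinAt)
      (fun t ht ↦ (hasDerivAt_pade_sub_log (interior_subset ht)).hasDerivWithinAt)
      (fun t ht ↦ ?_)
    rw [interior_Ici] at ht
    have ht : 0 < t := ht
    positivity
  simpa using hmono Set.self_mem_Ici hx hx

lemma pade_eq_add_of_quadratic_root {β δ : ℝ} (hβ : β ≤ 0)
    (hδ : δ = (-2 * β + √(4 * β ^ 2 - 18 * β)) / 3) :
    0 ≤ δ ∧ (δ ^ 2 + 6 * δ) / (4 * δ + 6) = δ + β := by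
  have hsq : √(4 * β ^ 2 - 18 * β) ^ 2 = 4 * β ^ 2 - 18 * β := sq_sqrt (by nlinarith)
  have hδ_nonneg : 0 ≤ δ := by
    rw [hδ]
    linarith [sqrt_nonneg (4 * β ^ 2 - 18 * β)]
  refine ⟨hδ_nonneg, ?_⟩
  rw [div_eq_iff (by positivity), hδ]
  linear_combination -hsq / 3

lemma neg_add_log_one_add_le_of_quadratic_root {β δ : ℝ} (hβ : β ≤ 0)
    (hδ : δ = (-2 * β + √(4 * β ^ 2 - 18 * β)) / 3) :
    -δ + log (1 + δ) ≤ β := by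
  obtain ⟨hδ_nonneg, hpade⟩ := pade_eq_add_of_quadratic_root hβ hδ
  linarith [log_one_add_le_pade hδ_nonneg]

theorem inversion_conf_upper (γ μhat : ℝ) (hγ0 : 0 < γ) (hγ1 : γ < 1) (hμ : 0 < μhat)
    (β δU : ℝ) (hβ : β = Real.log γ / μhat)
    (hδU : δU = (-2 * β + Real.sqrt (4 * β ^ 2 - 18 * β)) / 3) :
    (-δU + Real.log (1 + δU)) * μhat ≤ Real.log γ := by
  have hβ_nonpos : β ≤ 0 := hβ ▸ div_nonpos_of_nonpos_of_nonneg (log_nonpos hγ0.le hγ1.le) hμ.le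
  calc (-δU + log (1 + δU)) * μhat
      ≤ β * μhat :=
        mul_le_mul_of_nonneg_right (neg_add_log_one_add_le_of_quadratic_root hβ_nonpos hδU) hμ.le
    _ = log γ := by rw [hβ]; field_simp
end

section
/- Let μ > 0, 0 < γ < 1, set β = (log γ)/μ and let δ_U = (-β + √(β² - 18β))/3 (the positive root of 3δ² + 2βδ + 6β = 0). Then δ_U - (1+δ_U)·log(1+δ_U) ≤ β. -/
/-!
The Padé-type bound `x (6 + 5x) / ((6 + 2x)(1 + x)) ≤ log (1 + x)` for `x ≥ 0` holds because the
difference vanishes at `0` and has derivative `x³ / ((1 + x)² (3 + x)²) ≥ 0`. Multiplying by `1 + x`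
gives `x - (1 + x) log (1 + x) ≤ -3x² / (6 + 2x)`, and `δ_U` is precisely the nonnegative solution of
`-3δ² / (6 + 2δ) = β` when `β ≤ 0`.
-/

open Real Set

namespace Real

lemma hasDerivAt_log_one_add_sub_pade {y : ℝ} (hy : -1 < y) :
    HasDerivAt (fun x => log (1 + x) - x * (6 + 5 * x) / ((6 + 2 * x) * (1 + x)))
      (y ^ 3 / ((1 + y) ^ 2 * (3 + y) ^ 2)) y := by
  have h1 : 1 + y ≠ 0 := by linarith
  have h2 : 6 + 2 * y ≠ 0 := by linarith
  have h3 : 3 + y ≠ 0 := by linarith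
  have hden : ((6 + 2 * y) * (1 + y)) ^ 2 ≠ 0 := pow_ne_zero 2 (mul_ne_zero h2 h1)
  have := (((hasDerivAt_id' y).const_add 1).log h1).sub
    (((hasDerivAt_id' y).mul ((hasDerivAt_id' y).const_mul 5 |>.const_add 6)).div
      (((hasDerivAt_id' y).const_mul 2 |>.const_add 6).mul ((hasDerivAt_id' y).const_add 1))
      (mul_ne_zero h2 h1))
  refine this.congr_deriv ?_
  simp only [Pi.mul_apply]
  rw [div_sub_div _ _ h1 hden,
    div_eq_div_iff (mul_ne_zero h1 hden) (mul_ne_zero (pow_ne_zero 2 h1) (pow_ne_zero 2 h3))]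
  ring

theorem le_log_one_add_pade_of_nonneg {x : ℝ} (hx : 0 ≤ x) :
    x * (6 + 5 * x) / ((6 + 2 * x) * (1 + x)) ≤ log (1 + x) := by
  have hmono : MonotoneOn (fun x => log (1 + x) - x * (6 + 5 * x) / ((6 + 2 * x) * (1 + x)))
      (Ici 0) := by
    refine monotoneOn_of_hasDerivWithinAt_nonneg (convex_Ici 0)
      (fun y hy => (hasDerivAt_log_one_add_sub_pade ?_).continuousAt.continuousWithinAt)
      (fun y hy => (hasDerivAt_log_one_add_sub_pade ?_).hasDerivWithinAt) (fun y hy => ?_)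
    · linarith [mem_Ici.mp hy]
    · rw [interior_Ici] at hy
      linarith [mem_Ioi.mp hy]
    · rw [interior_Ici] at hy
      have : 0 < y := hy
      positivity
  simpa using hmono self_mem_Ici hx hx

theorem sub_mul_log_one_add_le {x : ℝ} (hx : 0 ≤ x) :
    x - (1 + x) * log (1 + x) ≤ -3 * x ^ 2 / (6 + 2 * x) := by
  have h := mul_le_mul_of_nonneg_left (le_log_one_add_pade_of_nonneg hx) (by linarith : 0 ≤ 1 + x)
  have hlhs : (1 + x) * (x * (6 + 5 * x) / ((6 + 2 * x) * (1 + x))) =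
      x + 3 * x ^ 2 / (6 + 2 * x) := by
    field_simp
    ring
  rw [hlhs] at h
  rw [neg_mul, neg_div]
  linarith

end Real

lemma nonneg_and_neg_sq_div_eq_of_eq_root {β δ : ℝ} (hβ : β ≤ 0)
    (hδ : δ = (-β + √(β ^ 2 - 18 * β)) / 3) : 0 ≤ δ ∧ -3 * δ ^ 2 / (6 + 2 * δ) = β := by
  have hsq : √(β ^ 2 - 18 * β) ^ 2 = β ^ 2 - 18 * β := sq_sqrt (by nlinarith)
  have hδ0 : 0 ≤ δ := by rw [hδ]; linarith [sqrt_nonneg (β ^ 2 - 18 * β)]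
  have hroot : 3 * δ ^ 2 + 2 * β * δ + 6 * β = 0 := by rw [hδ]; linear_combination hsq / 3
  refine ⟨hδ0, ?_⟩
  rw [div_eq_iff (by linarith)]
  linear_combination -hroot

theorem inversion_tail_upper (μ γ : ℝ) (hμ : 0 < μ) (hγ0 : 0 < γ) (hγ1 : γ < 1)
    (β δU : ℝ) (hβ : β = Real.log γ / μ)
    (hδU : δU = (-β + Real.sqrt (β ^ 2 - 18 * β)) / 3) :
    δU - (1 + δU) * Real.log (1 + δU) ≤ β := by
  have hβ0 : β ≤ 0 := hβ ▸ div_nonpos_of_nonpos_of_nonneg (log_neg hγ0 hγ1).le hμ.le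
  obtain ⟨hδ0, hδβ⟩ := nonneg_and_neg_sq_div_eq_of_eq_root hβ0 hδU
  exact hδβ ▸ sub_mul_log_one_add_le hδ0
end

section
/- For every real number x with 0 < x < 1, it holds that x - (1+x)·log(1+x) < (-15x² - 7x³)/(30 + 24x + 3x²). -/
/-!
Let `F(t)` be the right-hand side minus the left-hand side. Then `F(0) = 0` and
`F'(t) = log(1 + t) - R(t)` with `R` rational, so it suffices that `F' > 0` for `t > 0`.
This follows by sandwiching the [2/2] Padé approximant `(6t + 3t²)/(6 + 6t + t²)` of
`log(1 + t)` between them: it lies strictly below `log(1 + t)` (same argument: its difference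
with the logarithm vanishes at 0 and has derivative `t⁴/((1 + t)(6 + 6t + t²)²)`), and it
exceeds `R(t)` by `(24t⁵ + 6t⁶)/((6 + 6t + t²)(30 + 24t + 3t²)²)`.
-/

open Real Set

lemma pos_of_hasDerivAt_pos {f f' : ℝ → ℝ} (hf : ∀ t, 0 ≤ t → HasDerivAt f (f' t) t)
    (hf' : ∀ t, 0 < t → 0 < f' t) (hf0 : f 0 = 0) {x : ℝ} (hx : 0 < x) : 0 < f x := by
  have hmono : StrictMonoOn f (Ici 0) := by
    refine strictMonoOn_of_deriv_pos (convex_Ici 0)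
      (fun t ht => (hf t ht).continuousAt.continuousWithinAt) fun t ht => ?_
    rw [interior_Ici] at ht
    rw [(hf t (le_of_lt ht)).deriv]
    exact hf' t ht
  simpa [hf0] using hmono self_mem_Ici (le_of_lt hx) hx

lemma hasDerivAt_log_one_add {t : ℝ} (ht : 0 ≤ t) :
    HasDerivAt (fun t => log (1 + t)) (1 / (1 + t)) t := by
  simpa using ((hasDerivAt_id t).const_add 1).log (by positivity)

lemma div_lt_log_one_add {t : ℝ} (ht : 0 < t) :
    (6 * t + 3 * t ^ 2) / (6 + 6 * t + t ^ 2) < log (1 + t) := by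
  refine sub_pos.1 <| pos_of_hasDerivAt_pos
    (f := fun t => log (1 + t) - (6 * t + 3 * t ^ 2) / (6 + 6 * t + t ^ 2))
    (f' := fun t => t ^ 4 / ((1 + t) * (6 + 6 * t + t ^ 2) ^ 2))
    (fun s hs => ?_) (fun s hs => by positivity) (by simp) ht
  have hnum : HasDerivAt (fun s => 6 * s + 3 * s ^ 2) (6 + 6 * s) s :=
    (((hasDerivAt_id' s).const_mul 6).add ((hasDerivAt_pow 2 s).const_mul 3)).congr_deriv
      (by norm_num; ring)
  have hden : HasDerivAt (fun s => 6 + 6 * s + s ^ 2) (6 + 2 * s) s :=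
    ((((hasDerivAt_id' s).const_mul 6).const_add 6).add (hasDerivAt_pow 2 s)).congr_deriv
      (by norm_num)
  refine ((hasDerivAt_log_one_add hs).sub (hnum.div hden (by positivity))).congr_deriv ?_
  field_simp
  ring

lemma hasDerivAt_pade_sub {t : ℝ} (ht : 0 ≤ t) :
    HasDerivAt
      (fun t => (-15 * t ^ 2 - 7 * t ^ 3) / (30 + 24 * t + 3 * t ^ 2) - (t - (1 + t) * log (1 + t)))
      (log (1 + t) - (900 * t + 990 * t ^ 2 + 336 * t ^ 3 + 21 * t ^ 4)
        / (30 + 24 * t + 3 * t ^ 2) ^ 2) t := by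
  have hnum : HasDerivAt (fun t => -15 * t ^ 2 - 7 * t ^ 3) (-30 * t - 21 * t ^ 2) t :=
    (((hasDerivAt_pow 2 t).const_mul (-15)).sub ((hasDerivAt_pow 3 t).const_mul 7)).congr_deriv
      (by norm_num; ring)
  have hden : HasDerivAt (fun t => 30 + 24 * t + 3 * t ^ 2) (24 + 6 * t) t :=
    ((((hasDerivAt_id' t).const_mul 24).const_add 30).add
      ((hasDerivAt_pow 2 t).const_mul 3)).congr_deriv (by norm_num; ring)
  have hxlog := ((hasDerivAt_id' t).const_add 1).mul (hasDerivAt_log_one_add ht)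
  refine ((hnum.div hden (by positivity)).sub ((hasDerivAt_id' t).sub hxlog)).congr_deriv ?_
  field_simp
  ring

lemma quartic_div_le_pade_log {t : ℝ} (ht : 0 ≤ t) :
    (900 * t + 990 * t ^ 2 + 336 * t ^ 3 + 21 * t ^ 4) / (30 + 24 * t + 3 * t ^ 2) ^ 2
      ≤ (6 * t + 3 * t ^ 2) / (6 + 6 * t + t ^ 2) := by
  rw [div_le_div_iff₀ (by positivity) (by positivity)]
  nlinarith [pow_nonneg ht 5, pow_nonneg ht 6]

theorem pade_cubic_upper_general (x : ℝ) (h0 : 0 < x) :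
    x - (1 + x) * Real.log (1 + x) <
      (-15 * x ^ 2 - 7 * x ^ 3) / (30 + 24 * x + 3 * x ^ 2) := by
  have hF := pos_of_hasDerivAt_pos (fun t ht => hasDerivAt_pade_sub ht)
    (fun t ht => sub_pos.2 ((quartic_div_le_pade_log ht.le).trans_lt (div_lt_log_one_add ht)))
    (by simp) h0
  exact sub_pos.1 hF

theorem pade_cubic_upper (x : ℝ) (h0 : 0 < x) (h1 : x < 1) :
    x - (1 + x) * Real.log (1 + x) <
      (-15 * x ^ 2 - 7 * x ^ 3) / (30 + 24 * x + 3 * x ^ 2) :=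
  pade_cubic_upper_general x h0
end

section
/- For every real number x with 0 < x < 1, it holds that -x - (1-x)·log(1-x) < (-210x² + 125x³)/(420 - 390x + 60x² + 3x³). -/
/-!
With `num t = t * den t - 210 t² + 125 t³` the claim reads
`-log (1 - x) < num x / ((1 - x) den x)`.
The difference `gap t = log (1 - t) + num t / ((1 - t) den t)` vanishes at `0` and has derivative
`t⁶ (735 + 9 t) / ((1 - t) den t)²`, so it is strictly increasing on `[0, 1)`.
-/

namespace PadeCubic

open Real Set

def den (t : ℝ) : ℝ := 420 - 390 * t + 60 * t ^ 2 + 3 * t ^ 3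

def num (t : ℝ) : ℝ := 420 * t - 600 * t ^ 2 + 185 * t ^ 3 + 3 * t ^ 4

noncomputable def gap (t : ℝ) : ℝ := log (1 - t) + num t / ((1 - t) * den t)

lemma den_pos {t : ℝ} (h0 : 0 ≤ t) (h1 : t ≤ 1) : 0 < den t := by
  unfold den; nlinarith

lemma hasDerivAt_num (t : ℝ) :
    HasDerivAt num (420 - 1200 * t + 555 * t ^ 2 + 12 * t ^ 3) t :=
  (((((hasDerivAt_id' t).const_mul 420).sub ((hasDerivAt_pow 2 t).const_mul 600)).add
    ((hasDerivAt_pow 3 t).const_mul 185)).add ((hasDerivAt_pow 4 t).const_mul 3)).congr_deriv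
    (by norm_num; ring)

lemma hasDerivAt_den (t : ℝ) : HasDerivAt den (-390 + 120 * t + 9 * t ^ 2) t :=
  (((((hasDerivAt_const t 420).sub ((hasDerivAt_id' t).const_mul 390)).add
    ((hasDerivAt_pow 2 t).const_mul 60)).add ((hasDerivAt_pow 3 t).const_mul 3))).congr_deriv
    (by norm_num; ring)

lemma hasDerivAt_gap {t : ℝ} (h1 : 1 - t ≠ 0) (hden : den t ≠ 0) :
    HasDerivAt gap (t ^ 6 * (735 + 9 * t) / ((1 - t) * den t) ^ 2) t := by
  have hD : HasDerivAt (fun y ↦ (1 - y) * den y)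
      (-den t + (1 - t) * (-390 + 120 * t + 9 * t ^ 2)) t :=
    (((hasDerivAt_id' t).const_sub 1).mul (hasDerivAt_den t)).congr_deriv (by ring)
  refine ((((hasDerivAt_id' t).const_sub 1).log h1).add
    ((hasDerivAt_num t).div hD (mul_ne_zero h1 hden))).congr_deriv ?_
  field_simp
  simp only [den, num]
  ring

lemma gap_strictMonoOn : StrictMonoOn gap (Ico 0 1) := by
  have hderiv : ∀ t ∈ Ico (0 : ℝ) 1, HasDerivAt gap
      (t ^ 6 * (735 + 9 * t) / ((1 - t) * den t) ^ 2) t := fun t ht ↦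
    hasDerivAt_gap (by linarith [ht.2]) (den_pos ht.1 ht.2.le).ne'
  refine strictMonoOn_of_deriv_pos (convex_Ico 0 1)
    (fun t ht ↦ (hderiv t ht).continuousAt.continuousWithinAt) ?_
  rw [interior_Ico]
  rintro t ⟨ht0, ht1⟩
  rw [(hderiv t ⟨ht0.le, ht1⟩).deriv]
  have : 0 < (1 - t) * den t := mul_pos (by linarith) (den_pos ht0.le ht1.le)
  positivity

lemma gap_zero : gap 0 = 0 := by simp [gap, num]

end PadeCubic

open PadeCubic in
theorem pade_cubic_lower (x : ℝ) (h0 : 0 < x) (h1 : x < 1) :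
    -x - (1 - x) * Real.log (1 - x) <
      (-210 * x ^ 2 + 125 * x ^ 3) / (420 - 390 * x + 60 * x ^ 2 + 3 * x ^ 3) := by
  have hgap : 0 < gap x :=
    gap_zero ▸ gap_strictMonoOn ⟨le_rfl, zero_lt_one⟩ ⟨h0.le, h1⟩ h0
  have h1x : 0 < 1 - x := by linarith
  have hden : 0 < den x := den_pos h0.le h1.le
  have hlog : -((1 - x) * Real.log (1 - x)) < num x / den x := by
    have := mul_lt_mul_of_pos_left (neg_lt_iff_pos_add'.mpr hgap) h1x
    rwa [mul_div_assoc', mul_div_mul_left _ _ h1x.ne', ← neg_mul_eq_mul_neg] at this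
  have hsplit : (-210 * x ^ 2 + 125 * x ^ 3) / (420 - 390 * x + 60 * x ^ 2 + 3 * x ^ 3) =
      num x / den x - x := by
    rw [eq_sub_iff_add_eq, ← den, div_add' _ _ _ hden.ne']
    simp only [den, num]
    ring
  linarith
end
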